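/- Let u, v ∈ V with u < v, and suppose there is an increasing path from u to v. Then there exists k ≤ card(V) such that the k-fold iterate step^[k]({u}) is nonempty and min(step^[k]({u})) = v. (A probe greedily forwarded from u, starting with frontier {u}, reaches the destination v whenever v is reachable from u along explicit edges of increasing identifier.) -/
import Mathlib


/-- One forwarding step of a probe with destination `v`: the minimum of the frontier `S`
is removed and replaced by all its `E`-successors with larger identifier at most `v`. -/
def probeStep {V : Type*} [Fintype V] [LinearOrder V]
    (E : V → V → Prop) [DecidableRel E] (v : V) (S : Finset V) : Finset V :=
  if h : S.Nonempty then
    (S.erase (S.min' h)) ∪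
      (Finset.univ.filter (fun y => E (S.min' h) y ∧ S.min' h < y ∧ y ≤ v))
  else ∅

private lemma lt_of_tg {V : Type*} [LinearOrder V] {E : V → V → Prop} {a b : V}
    (h : Relation.TransGen (fun a b => E a b ∧ a < b) a b) : a < b := by
  induction h with
  | single h => exact h.2
  | tail _ h ih => exact ih.trans h.2

private lemma probe_key {V : Type*} [Fintype V] [LinearOrder V]
    (E : V → V → Prop) [DecidableRel E] (v : V) :
    ∀ n (S : Finset V) (hS : S.Nonempty),
    (Finset.univ.filter (fun x => S.min' hS ≤ x)).card ≤ n →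
    (∀ x ∈ S, x ≤ v) →
    (v ∈ S ∨ ∃ s ∈ S, Relation.TransGen (fun a b => E a b ∧ a < b) s v) →
    ∃ k ≤ n, ∃ h : ((probeStep E v)^[k] S).Nonempty,
      ((probeStep E v)^[k] S).min' h = v := by
  intro n
  induction n with
  | zero =>
    intro S hS hcard hle _
    exfalso
    have hv : v ∈ Finset.univ.filter (fun x => S.min' hS ≤ x) := by
      simp only [Finset.mem_filter, Finset.mem_univ, true_and]
      exact hle _ (S.min'_mem hS)
    have := Finset.card_pos.mpr ⟨v, hv⟩
    omega
  | succ n ih =>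
    intro S hS hcard hle hcov
    by_cases hm : S.min' hS = v
    · exact ⟨0, by omega, hS, hm⟩
    have hmlt : S.min' hS < v := lt_of_le_of_ne (hle _ (S.min'_mem hS)) hm
    set m := S.min' hS with hmdef
    have hstep : probeStep E v S = (S.erase m) ∪
        (Finset.univ.filter (fun y => E m y ∧ m < y ∧ y ≤ v)) := by
      rw [probeStep, dif_pos hS]
    -- there is an element of the step set that is v or has a path to v
    have hwit : ∃ x ∈ probeStep E v S,
        (x = v ∨ Relation.TransGen (fun a b => E a b ∧ a < b) x v) := by
      rcases hcov with hv | ⟨s, hsS, hsv⟩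
      · refine ⟨v, ?_, Or.inl rfl⟩
        rw [hstep]
        exact Finset.mem_union_left _ (Finset.mem_erase.mpr ⟨(ne_of_lt hmlt).symm, hv⟩)
      by_cases hsm : s = m
      · subst hsm
        rcases Relation.TransGen.head'_iff.mp hsv with ⟨y, hmy, hyv⟩
        have hymem : ∀ hy : y ≤ v, y ∈ probeStep E v S := by
          intro hy
          rw [hstep]
          refine Finset.mem_union_right _ ?_
          simp only [Finset.mem_filter, Finset.mem_univ, true_and]
          exact ⟨hmy.1, hmy.2, hy⟩
        rcases Relation.reflTransGen_iff_eq_or_transGen.mp hyv with h | h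
        · exact ⟨y, hymem (le_of_eq h.symm), Or.inl h.symm⟩
        · exact ⟨y, hymem (le_of_lt (lt_of_tg h)), Or.inr h⟩
      · refine ⟨s, ?_, Or.inr hsv⟩
        rw [hstep]
        exact Finset.mem_union_left _ (Finset.mem_erase.mpr ⟨hsm, hsS⟩)
    obtain ⟨x, hxmem, hxcov⟩ := hwit
    have hS' : (probeStep E v S).Nonempty := ⟨x, hxmem⟩
    -- all elements of the step set are > m and ≤ v
    have hgt : ∀ y ∈ probeStep E v S, m < y ∧ y ≤ v := by
      intro y hy
      rw [hstep] at hy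
      rcases Finset.mem_union.mp hy with hy | hy
      · rcases Finset.mem_erase.mp hy with ⟨hne, hyS⟩
        exact ⟨lt_of_le_of_ne (S.min'_le _ hyS) (Ne.symm hne), hle _ hyS⟩
      · simp only [Finset.mem_filter, Finset.mem_univ, true_and] at hy
        exact ⟨hy.2.1, hy.2.2⟩
    have hminlt : m < (probeStep E v S).min' hS' :=
      (hgt _ ((probeStep E v S).min'_mem hS')).1
    -- measure decreases
    have hsubset : Finset.univ.filter (fun x => (probeStep E v S).min' hS' ≤ x) ⊂
        Finset.univ.filter (fun x => m ≤ x) := by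
      constructor
      · intro z hz
        simp only [Finset.mem_filter, Finset.mem_univ, true_and] at hz ⊢
        exact (le_of_lt hminlt).trans hz
      · intro hsub
        have hmmem : m ∈ Finset.univ.filter (fun x => m ≤ x) := by
          simp
        have := hsub hmmem
        simp only [Finset.mem_filter, Finset.mem_univ, true_and] at this
        exact absurd this (not_le.mpr hminlt)
    have hcard' : (Finset.univ.filter
        (fun x => (probeStep E v S).min' hS' ≤ x)).card ≤ n := by
      have := Finset.card_lt_card hsubset
      omega
    obtain ⟨k, hk, h, hmin⟩ := ih (probeStep E v S) hS' hcard'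
      (fun y hy => (hgt y hy).2)
      (by rcases hxcov with rfl | hx
          · exact Or.inl hxmem
          · exact Or.inr ⟨x, hxmem, hx⟩)
    have heq : (probeStep E v)^[k + 1] S = (probeStep E v)^[k] (probeStep E v S) :=
      Function.iterate_succ_apply _ _ _
    have hne : ((probeStep E v)^[k + 1] S).Nonempty := heq ▸ h
    refine ⟨k + 1, by omega, hne, ?_⟩
    have : ∀ (A B : Finset V) (e : A = B) (hA : A.Nonempty) (hB : B.Nonempty),
        A.min' hA = B.min' hB := by rintro A B rfl hA hB; rfl
    rw [this _ _ heq hne h]; exact hmin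

/-- If `u < v` and there is an increasing path from `u` to `v`, then a probe
greedily forwarded from `u`, starting with frontier `{u}`, reaches the destination `v`:
for some `k ≤ card V` the `k`-fold iterate of the probe step applied to `{u}` is nonempty
and has minimum `v`. -/
theorem probe_reaches_destination
    {V : Type*} [Fintype V] [LinearOrder V]
    (E : V → V → Prop) [DecidableRel E] (u v : V) (huv : u < v)
    (hpath : Relation.TransGen (fun a b => E a b ∧ a < b) u v) :
    ∃ k ≤ Fintype.card V, ∃ h : ((probeStep E v)^[k] {u}).Nonempty,
      ((probeStep E v)^[k] {u}).min' h = v := by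
  refine probe_key E v (Fintype.card V) {u} ⟨u, Finset.mem_singleton_self u⟩ ?_ ?_ ?_
  · exact (Finset.card_filter_le _ _).trans (le_of_eq (Finset.card_univ))
  · intro x hx
    rw [Finset.mem_singleton] at hx
    exact hx ▸ le_of_lt huv
  · exact Or.inr ⟨u, Finset.mem_singleton_self u, hpath⟩
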